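/- Let Γ and Δ be ranked alphabets, φ a complete tree homomorphism from Γ to Δ, t a tree over Γ with root symbol g, and ℓ, n ∈ ℕ. If ([], i, j) ∈ SSP^ℓ_n(t), then there exists (v, i', j') ∈ SSP^ℓ_n(φ̂(t)) such that v ∈ pos(φ(g)), v ++ [i'] ⪯ v_1 for some position v_1 of φ(g) labelled by the variable x_i, and v ++ [j'] ⪯ v_2 for some position v_2 of φ(g) labelled by the variable x_j. -/
import Mathlib


namespace Paper

/-- Trees over a ranked alphabet `(Γ, ar)` as a W-type. -/
abbrev Tree {Γ : Type} (ar : Γ → ℕ) : Type := WType (fun g : Γ => Fin (ar g))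

variable {Γ : Type} {ar : Γ → ℕ}

/-- Root symbol of a tree. -/
def root : Tree ar → Γ
  | ⟨g, _⟩ => g

/-- `inPos t w` holds iff `w` is a position of `t`. -/
def inPos : Tree ar → List ℕ → Prop
  | _, [] => True
  | ⟨g, f⟩, i :: w => ∃ h : i < ar g, inPos (f ⟨i, h⟩) w

/-- The set of positions of a tree. -/
def pos (t : Tree ar) : Set (List ℕ) := {w | inPos t w}

/-- Subtree of `t` at position `w` (junk value if `w` is not a position of `t`). -/
def subtree : Tree ar → List ℕ → Tree ar
  | t, [] => t
  | ⟨g, f⟩, i :: w => if h : i < ar g then subtree (f ⟨i, h⟩) w else ⟨g, f⟩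

/-- Branching positions of `t` together with two distinct successor directions. -/
def branch (t : Tree ar) : Set (List ℕ × ℕ × ℕ) :=
  {p | p.1 ∈ pos t ∧ 2 ≤ ar (root (subtree t p.1)) ∧
       p.2.1 < ar (root (subtree t p.1)) ∧ p.2.2 < ar (root (subtree t p.1)) ∧ p.2.1 ≠ p.2.2}

/-- Branching positions of `t` along the path from `w` to `w ++ w''`. -/
def branchPath (t : Tree ar) (w w'' : List ℕ) : Set (List ℕ) :=
  {v | ∃ w', w' <+: w'' ∧ v = w ++ w' ∧ ∃ i j, (w ++ w', i, j) ∈ branch t}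

/-- First projections of a set of triples. -/
def SPof (S : Set (List ℕ × ℕ × ℕ)) : Set (List ℕ) := {w | ∃ i j, (w, i, j) ∈ S}

/-- The sets `SSP^ℓ_n(t)`. -/
def SSP (ℓ : ℕ) : ℕ → Tree ar → Set (List ℕ × ℕ × ℕ)
  | 0, t => branch t
  | n+1, t =>
      {p | p ∈ branch t ∧
        (∃ w₁ ∈ SPof (SSP ℓ n (subtree t (p.1 ++ [p.2.1]))),
          ℓ ^ (n+1) ≤ (branchPath t (p.1 ++ [p.2.1]) w₁ ∩ SPof (SSP ℓ n t)).ncard) ∧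
        (∃ w₂ ∈ SPof (SSP ℓ n (subtree t (p.1 ++ [p.2.2]))),
          ℓ ^ (n+1) ≤ (branchPath t (p.1 ++ [p.2.2]) w₂ ∩ SPof (SSP ℓ n t)).ncard)}

/-- The sets `SP^ℓ_n(t)`. -/
def SP (ℓ n : ℕ) (t : Tree ar) : Set (List ℕ) := SPof (SSP ℓ n t)

/-- Height of a tree: 0 for leaves, otherwise 1 + maximum height of the subtrees. -/
def height : Tree ar → ℕ
  | ⟨_, f⟩ => Finset.univ.sup fun i => height (f i) + 1

/-- Arity function for the alphabet `Δ` extended with `k` nullary variables. -/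
def extAr {Δ : Type} (arΔ : Δ → ℕ) (k : ℕ) : Δ ⊕ Fin k → ℕ := Sum.elim arΔ fun _ => 0

/-- Trees over `Δ` with variables `x_0, …, x_{k-1}`: the set `T_Δ(X_k)`. -/
abbrev TreeX {Δ : Type} (arΔ : Δ → ℕ) (k : ℕ) : Type := Tree (extAr arΔ k)

variable {Δ : Type} {arΔ : Δ → ℕ}

/-- Substitution `s[u 0, …, u (k-1)]` of trees for the variables. -/
def subst {k : ℕ} (u : Fin k → Tree arΔ) : TreeX arΔ k → Tree arΔ
  | ⟨Sum.inl d, f⟩ => ⟨d, fun i => subst u (f i)⟩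
  | ⟨Sum.inr i, _⟩ => u i

/-- The tree map `ĥ` induced by a tree homomorphism `h`. -/
def applyHom {arΓ : Γ → ℕ} (h : ∀ g : Γ, TreeX arΔ (arΓ g)) : Tree arΓ → Tree arΔ
  | ⟨g, f⟩ => subst (fun i => applyHom h (f i)) (h g)

/-- Number of occurrences of the variable `x_i` in a tree of `T_Δ(X_k)`. -/
def varCount {k : ℕ} (i : Fin k) : TreeX arΔ k → ℕ
  | ⟨Sum.inl _, f⟩ => ∑ j, varCount i (f j)
  | ⟨Sum.inr j, _⟩ => if j = i then 1 else 0

/-- A tree homomorphism is linear if every variable occurs at most once in each image. -/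
def Linear {arΓ : Γ → ℕ} (h : ∀ g : Γ, TreeX arΔ (arΓ g)) : Prop :=
  ∀ (g : Γ) (i : Fin (arΓ g)), varCount i (h g) ≤ 1

/-- A tree homomorphism is complete if every variable occurs at least once in each image. -/
def Complete {arΓ : Γ → ℕ} (h : ∀ g : Γ, TreeX arΔ (arΓ g)) : Prop :=
  ∀ (g : Γ) (i : Fin (arΓ g)), 1 ≤ varCount i (h g)

section Basic
variable {Γ : Type} {ar : Γ → ℕ}

@[simp] theorem inPos_nil (t : Tree ar) : inPos t [] := by
  obtain ⟨g, f⟩ := t; exact trivial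

@[simp] theorem subtree_nil (t : Tree ar) : subtree t [] = t := by
  obtain ⟨g, f⟩ := t; rfl

@[simp] theorem root_mk (g : Γ) (f : Fin (ar g) → Tree ar) : root (⟨g, f⟩ : Tree ar) = g := rfl

theorem inPos_cons {g : Γ} {f : Fin (ar g) → Tree ar} {i : ℕ} {w : List ℕ} :
    inPos (⟨g, f⟩ : Tree ar) (i :: w) ↔ ∃ h : i < ar g, inPos (f ⟨i, h⟩) w := Iff.rfl

theorem subtree_cons {g : Γ} {f : Fin (ar g) → Tree ar} {i : ℕ} (hi : i < ar g) (w : List ℕ) :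
    subtree (⟨g, f⟩ : Tree ar) (i :: w) = subtree (f ⟨i, hi⟩) w := by
  simp [subtree, dif_pos hi]

theorem inPos_prefix {t : Tree ar} {w w' : List ℕ} (h : inPos t (w ++ w')) : inPos t w := by
  induction w generalizing t with
  | nil => exact inPos_nil t
  | cons i w ih =>
    obtain ⟨g, f⟩ := t
    obtain ⟨hi, h⟩ := h
    exact ⟨hi, ih h⟩

theorem inPos_of_prefix {t : Tree ar} {w w' : List ℕ} (hp : w <+: w') (h : inPos t w') :
    inPos t w := by
  obtain ⟨r, rfl⟩ := hp; exact inPos_prefix h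

theorem subtree_append {t : Tree ar} {w : List ℕ} (h : inPos t w) (w' : List ℕ) :
    subtree t (w ++ w') = subtree (subtree t w) w' := by
  induction w generalizing t with
  | nil => simp
  | cons i w ih =>
    obtain ⟨g, f⟩ := t
    obtain ⟨hi, h⟩ := h
    rw [List.cons_append, subtree_cons hi, subtree_cons hi, ih h]

theorem inPos_append {t : Tree ar} {w : List ℕ} (h : inPos t w) (w' : List ℕ) :
    inPos t (w ++ w') ↔ inPos (subtree t w) w' := by
  induction w generalizing t with
  | nil => simp
  | cons i w ih =>
    obtain ⟨g, f⟩ := t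
    obtain ⟨hi, h⟩ := h
    rw [List.cons_append, subtree_cons hi]
    constructor
    · rintro ⟨hi', h'⟩
      exact (ih h).mp h'
    · intro h'
      exact ⟨hi, (ih h).mpr h'⟩

theorem inPos_snoc {t : Tree ar} {w : List ℕ} (h : inPos t w) {i : ℕ}
    (hi : i < ar (root (subtree t w))) : inPos t (w ++ [i]) := by
  rw [inPos_append h]
  rcases hs : subtree t w with ⟨g, f⟩
  rw [hs] at hi
  exact ⟨by simpa using hi, inPos_nil _⟩

end Basic
section Subst
variable {Γ Δ : Type} {arΓ : Γ → ℕ} {arΔ : Δ → ℕ}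

theorem exists_var_pos {k : ℕ} {s : TreeX arΔ k} {i : Fin k} (h : 1 ≤ varCount i s) :
    ∃ p, inPos s p ∧ root (subtree s p) = Sum.inr i := by
  induction s with
  | mk a f ih =>
    rcases a with d | j
    · rw [show varCount i (⟨Sum.inl d, f⟩ : TreeX arΔ k) = ∑ j, varCount i (f j) from rfl] at h
      have : ∃ j, 1 ≤ varCount i (f j) := by
        by_contra hc
        push_neg at hc
        simp only [Nat.lt_one_iff] at hc
        rw [Finset.sum_congr rfl (fun j _ => hc j)] at h
        simp at h
      obtain ⟨j, hj⟩ := this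
      obtain ⟨p, hp, hr⟩ := ih j hj
      refine ⟨j.1 :: p, ⟨j.2, ?_⟩, ?_⟩
      · simpa using hp
      · rw [subtree_cons j.2]
        simpa using hr
    · rw [show varCount i (⟨Sum.inr j, f⟩ : TreeX arΔ k) = if j = i then 1 else 0 from rfl] at h
      split at h
      · subst ‹j = i›
        exact ⟨[], inPos_nil _, rfl⟩
      · simp at h

theorem root_subtree_inl {k : ℕ} {s : TreeX arΔ k} {p : List ℕ} {d : ℕ}
    (hp : inPos s (p ++ [d])) : ∃ d', root (subtree s p) = Sum.inl d' := by
  have hp0 : inPos s p := inPos_prefix hp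
  have h1 : inPos (subtree s p) [d] := (inPos_append hp0 [d]).mp hp
  rcases hs : subtree s p with ⟨a, f⟩
  rw [hs] at h1
  obtain ⟨hd, -⟩ := h1
  rcases a with d' | j
  · exact ⟨d', by simp⟩
  · exact absurd hd (by simp [extAr])

theorem subst_inl {k : ℕ} (u : Fin k → Tree arΔ) {s : TreeX arΔ k} {p : List ℕ} {d : Δ}
    (hp : inPos s p) (hd : root (subtree s p) = Sum.inl d) :
    inPos (subst u s) p ∧ subtree (subst u s) p = subst u (subtree s p) := by
  induction p generalizing s with
  | nil =>
    exact ⟨inPos_nil _, by simp⟩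
  | cons c p ih =>
    rcases s with ⟨a, f⟩
    obtain ⟨hc, hp'⟩ := hp
    rcases a with d₀ | j
    · have hc' : c < arΔ d₀ := hc
      have e1 : subst u (⟨Sum.inl d₀, f⟩ : TreeX arΔ k) = ⟨d₀, fun i => subst u (f i)⟩ := rfl
      rw [subtree_cons hc] at hd
      obtain ⟨h1, h2⟩ := ih (s := f ⟨c, hc⟩) hp' hd
      rw [e1]
      refine ⟨⟨hc', h1⟩, ?_⟩
      rw [subtree_cons hc, subtree_cons (show c < arΔ d₀ from hc')]
      exact h2
    · exact absurd hc (by simp [extAr])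

theorem subst_inr {k : ℕ} (u : Fin k → Tree arΔ) {s : TreeX arΔ k} {p : List ℕ} {i : Fin k}
    (hp : inPos s p) (hd : root (subtree s p) = Sum.inr i) (q : List ℕ) :
    subtree (subst u s) (p ++ q) = subtree (u i) q ∧
      (inPos (subst u s) (p ++ q) ↔ inPos (u i) q) := by
  induction p generalizing s with
  | nil =>
    rcases s with ⟨a, f⟩
    simp only [subtree_nil, root_mk] at hd
    subst hd
    exact ⟨rfl, Iff.rfl⟩
  | cons c p ih =>
    rcases s with ⟨a, f⟩
    obtain ⟨hc, hp'⟩ := hp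
    rcases a with d₀ | j
    · have hc' : c < arΔ d₀ := hc
      rw [subtree_cons hc] at hd
      obtain ⟨h1, h2⟩ := ih (s := f ⟨c, hc⟩) hp' hd
      have e1 : subst u (⟨Sum.inl d₀, f⟩ : TreeX arΔ k) = ⟨d₀, fun i => subst u (f i)⟩ := rfl
      rw [e1]
      constructor
      · rw [List.cons_append, subtree_cons (show c < arΔ d₀ from hc')]
        exact h1
      · rw [List.cons_append]
        constructor
        · rintro ⟨hc'', hq⟩
          exact h2.mp hq
        · intro hq
          exact ⟨hc', h2.mpr hq⟩
    · exact absurd hc (by simp [extAr])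

end Subst
section Psi
variable {Γ Δ : Type} {arΓ : Γ → ℕ} {arΔ : Δ → ℕ}
variable (φ : ∀ g : Γ, TreeX arΔ (arΓ g)) (hφ : Complete φ)

/-- Designated occurrence of the variable `x_i` in `φ g`. -/
noncomputable def chi (g : Γ) (i : Fin (arΓ g)) : List ℕ :=
  (exists_var_pos (hφ g i)).choose

theorem chi_spec (g : Γ) (i : Fin (arΓ g)) :
    inPos (φ g) (chi φ hφ g i) ∧ root (subtree (φ g) (chi φ hφ g i)) = Sum.inr i :=
  (exists_var_pos (hφ g i)).choose_spec

/-- Embedding of positions of `t` into positions of `applyHom φ t`. -/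
noncomputable def psi : Tree arΓ → List ℕ → List ℕ
  | _, [] => []
  | ⟨g, f⟩, c :: w =>
      if h : c < arΓ g then chi φ hφ g ⟨c, h⟩ ++ psi (f ⟨c, h⟩) w else []

@[simp] theorem psi_nil (t : Tree arΓ) : psi φ hφ t [] = [] := by
  obtain ⟨g, f⟩ := t; rfl

theorem psi_cons {g : Γ} {f : Fin (arΓ g) → Tree arΓ} {c : ℕ} (hc : c < arΓ g) (w : List ℕ) :
    psi φ hφ (⟨g, f⟩ : Tree arΓ) (c :: w) = chi φ hφ g ⟨c, hc⟩ ++ psi φ hφ (f ⟨c, hc⟩) w := by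
  simp [psi, dif_pos hc]

theorem applyHom_mk (g : Γ) (f : Fin (arΓ g) → Tree arΓ) :
    applyHom φ (⟨g, f⟩ : Tree arΓ) = subst (fun i => applyHom φ (f i)) (φ g) := rfl

theorem psi_spec {t : Tree arΓ} {w : List ℕ} (h : inPos t w) :
    inPos (applyHom φ t) (psi φ hφ t w) ∧
      subtree (applyHom φ t) (psi φ hφ t w) = applyHom φ (subtree t w) := by
  induction w generalizing t with
  | nil => simp
  | cons c w ih =>
    obtain ⟨g, f⟩ := t
    obtain ⟨hc, h'⟩ := h
    rw [psi_cons φ hφ hc, subtree_cons hc]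
    obtain ⟨hχ, hχr⟩ := chi_spec φ hφ g ⟨c, hc⟩
    have key := subst_inr (fun i => applyHom φ (f i)) hχ hχr (psi φ hφ (f ⟨c, hc⟩) w)
    rw [applyHom_mk]
    obtain ⟨ih1, ih2⟩ := ih h'
    exact ⟨key.2.mpr ih1, by rw [key.1]; exact ih2⟩

theorem psi_inPos {t : Tree arΓ} {w : List ℕ} (h : inPos t w) :
    inPos (applyHom φ t) (psi φ hφ t w) := (psi_spec φ hφ h).1

theorem subtree_applyHom_psi {t : Tree arΓ} {w : List ℕ} (h : inPos t w) :
    subtree (applyHom φ t) (psi φ hφ t w) = applyHom φ (subtree t w) := (psi_spec φ hφ h).2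

theorem psi_append {t : Tree arΓ} {w : List ℕ} (h : inPos t w) (w' : List ℕ) :
    psi φ hφ t (w ++ w') = psi φ hφ t w ++ psi φ hφ (subtree t w) w' := by
  induction w generalizing t with
  | nil => simp
  | cons c w ih =>
    obtain ⟨g, f⟩ := t
    obtain ⟨hc, h'⟩ := h
    rw [List.cons_append, psi_cons φ hφ hc, psi_cons φ hφ hc, subtree_cons hc, ih h',
      List.append_assoc]

theorem psi_prefix {t : Tree arΓ} {w w' : List ℕ} (h : inPos t w') (hp : w <+: w') :
    psi φ hφ t w <+: psi φ hφ t w' := by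
  obtain ⟨r, rfl⟩ := hp
  rw [psi_append φ hφ (inPos_prefix h)]
  exact List.prefix_append _ _

theorem psi_single (s : Tree arΓ) {c : ℕ} (hc : c < arΓ (root s)) :
    psi φ hφ s [c] = chi φ hφ (root s) ⟨c, hc⟩ := by
  obtain ⟨g, f⟩ := s
  have hc' : c < arΓ g := hc
  rw [psi_cons φ hφ hc']
  simp

theorem psi_snoc {t : Tree arΓ} {w : List ℕ} (h : inPos t w) {c : ℕ}
    (hc : c < arΓ (root (subtree t w))) :
    psi φ hφ t (w ++ [c]) = psi φ hφ t w ++ chi φ hφ (root (subtree t w)) ⟨c, hc⟩ := by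
  rw [psi_append φ hφ h, psi_single φ hφ _ hc]
end Psi
section Shift
variable {Γ : Type} {ar : Γ → ℕ}

theorem mem_pos_iff {t : Tree ar} {w : List ℕ} : w ∈ pos t ↔ inPos t w := Iff.rfl

theorem SSP_subset_branch (ℓ : ℕ) : ∀ (n : ℕ) (t : Tree ar), SSP ℓ n t ⊆ branch t
  | 0, t => fun _ h => h
  | n+1, t => fun _ h => h.1

theorem branch_fst_pos {t : Tree ar} {v : List ℕ} {i j : ℕ} (h : (v, i, j) ∈ branch t) :
    inPos t v := h.1

theorem branch_shift {t : Tree ar} {w : List ℕ} (hw : inPos t w) (u : List ℕ) (i j : ℕ) :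
    (w ++ u, i, j) ∈ branch t ↔ (u, i, j) ∈ branch (subtree t w) := by
  unfold branch
  simp only [Set.mem_setOf_eq, mem_pos_iff]
  rw [subtree_append hw u, inPos_append hw u]

theorem branchPath_shift {t : Tree ar} {w : List ℕ} (hw : inPos t w) (x y : List ℕ) :
    branchPath t (w ++ x) y = (fun v => w ++ v) '' branchPath (subtree t w) x y := by
  ext v
  simp only [branchPath, Set.mem_setOf_eq, Set.mem_image]
  constructor
  · rintro ⟨w', hw', rfl, i, j, hb⟩
    refine ⟨x ++ w', ⟨w', hw', rfl, i, j, ?_⟩, by rw [List.append_assoc]⟩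
    rw [← branch_shift hw (x ++ w') i j, ← List.append_assoc]
    exact hb
  · rintro ⟨v', ⟨w', hw', rfl, i, j, hb⟩, rfl⟩
    refine ⟨w', hw', by rw [List.append_assoc], i, j, ?_⟩
    rw [List.append_assoc]
    exact (branch_shift hw (x ++ w') i j).mpr hb

theorem append_left_inj (w : List ℕ) : Function.Injective (fun v => w ++ v) :=
  fun _ _ h => List.append_cancel_left h

theorem SSP_shift (ℓ : ℕ) : ∀ (n : ℕ) {t : Tree ar} {w : List ℕ}, inPos t w →
    ∀ (u : List ℕ) (i j : ℕ),
    ((w ++ u, i, j) ∈ SSP ℓ n t ↔ (u, i, j) ∈ SSP ℓ n (subtree t w))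
  | 0, t, w, hw, u, i, j => branch_shift hw u i j
  | n+1, t, w, hw, u, i, j => by
    have hsp : ∀ v : List ℕ, (w ++ v ∈ SPof (SSP ℓ n t) ↔ v ∈ SPof (SSP ℓ n (subtree t w))) := by
      intro v
      constructor
      · rintro ⟨a, b, hab⟩; exact ⟨a, b, (SSP_shift ℓ n hw v a b).mp hab⟩
      · rintro ⟨a, b, hab⟩; exact ⟨a, b, (SSP_shift ℓ n hw v a b).mpr hab⟩
    have hint : ∀ (x y : List ℕ),
        branchPath t (w ++ x) y ∩ SPof (SSP ℓ n t) =
          (fun v => w ++ v) '' (branchPath (subtree t w) x y ∩ SPof (SSP ℓ n (subtree t w))) := by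
      intro x y
      ext v
      simp only [Set.mem_inter_iff, Set.mem_image, branchPath_shift hw x y]
      constructor
      · rintro ⟨⟨v', hv', rfl⟩, hsp'⟩
        exact ⟨v', ⟨hv', (hsp v').mp hsp'⟩, rfl⟩
      · rintro ⟨v', ⟨hv', hsp'⟩, rfl⟩
        exact ⟨⟨v', hv', rfl⟩, (hsp v').mpr hsp'⟩
    have hncard : ∀ (x y : List ℕ),
        (branchPath t (w ++ x) y ∩ SPof (SSP ℓ n t)).ncard =
          (branchPath (subtree t w) x y ∩ SPof (SSP ℓ n (subtree t w))).ncard := by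
      intro x y
      rw [hint x y, Set.ncard_image_of_injective _ (append_left_inj w)]
    show (_ ∈ branch t ∧ _ ∧ _) ↔ (_ ∈ branch (subtree t w) ∧ _ ∧ _)
    rw [branch_shift hw u i j]
    refine and_congr_right fun _ => ?_
    have e1 : ∀ c : ℕ, subtree t ((w ++ u) ++ [c]) = subtree (subtree t w) (u ++ [c]) := by
      intro c
      rw [List.append_assoc, subtree_append hw]
    refine and_congr ?_ ?_
    · show (∃ w₁ ∈ SPof (SSP ℓ n (subtree t ((w ++ u) ++ [i]))), _) ↔ _
      rw [e1 i]
      refine exists_congr fun w₁ => and_congr_right fun _ => ?_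
      rw [show (w ++ u) ++ [i] = w ++ (u ++ [i]) from List.append_assoc w u [i], hncard]
    · show (∃ w₂ ∈ SPof (SSP ℓ n (subtree t ((w ++ u) ++ [j]))), _) ↔ _
      rw [e1 j]
      refine exists_congr fun w₂ => and_congr_right fun _ => ?_
      rw [show (w ++ u) ++ [j] = w ++ (u ++ [j]) from List.append_assoc w u [j], hncard]

theorem SP_shift (ℓ n : ℕ) {t : Tree ar} {w : List ℕ} (hw : inPos t w) (u : List ℕ) :
    w ++ u ∈ SP ℓ n t ↔ u ∈ SP ℓ n (subtree t w) := by
  constructor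
  · rintro ⟨a, b, hab⟩; exact ⟨a, b, (SSP_shift ℓ n hw u a b).mp hab⟩
  · rintro ⟨a, b, hab⟩; exact ⟨a, b, (SSP_shift ℓ n hw u a b).mpr hab⟩

theorem branchPath_finite (t : Tree ar) (s y : List ℕ) : (branchPath t s y).Finite := by
  apply Set.Finite.subset (Set.Finite.image (fun v => s ++ v) (y.inits.finite_toSet))
  rintro v ⟨w', hw', rfl, -⟩
  exact ⟨w', by simpa using (List.mem_inits w' y).mpr hw', rfl⟩

theorem branchPath_rebase {t : Tree ar} (s δ y : List ℕ) :
    branchPath t (s ++ δ) y ⊆ branchPath t s (δ ++ y) := by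
  rintro v ⟨w', hw', rfl, i, j, hb⟩
  obtain ⟨r, rfl⟩ := hw'
  exact ⟨δ ++ w', ⟨r, by rw [List.append_assoc]⟩, by rw [List.append_assoc], i, j,
    by rw [List.append_assoc] at hb; exact hb⟩

end Shift

section Lcp

/-- Longest common prefix of two lists. -/
def lcp : List ℕ → List ℕ → List ℕ
  | a :: as, b :: bs => if a = b then a :: lcp as bs else []
  | _, _ => []

theorem lcp_prefix_left : ∀ x y : List ℕ, lcp x y <+: x
  | [], y => by simp [lcp]
  | a :: as, [] => by simp [lcp]
  | a :: as, b :: bs => by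
    by_cases h : a = b
    · simpa [lcp, h, List.cons_prefix_cons] using lcp_prefix_left as bs
    · simp [lcp, h]

theorem lcp_prefix_right : ∀ x y : List ℕ, lcp x y <+: y
  | [], y => by simp [lcp]
  | a :: as, [] => by simp [lcp]
  | a :: as, b :: bs => by
    by_cases h : a = b
    · subst h
      simpa [lcp, List.cons_prefix_cons] using lcp_prefix_right as bs
    · simp [lcp, h]

theorem lcp_div : ∀ x y : List ℕ, ¬ x <+: y → ¬ y <+: x →
    ∃ d₁ d₂, d₁ ≠ d₂ ∧ lcp x y ++ [d₁] <+: x ∧ lcp x y ++ [d₂] <+: y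
  | [], y, hxy, _ => absurd (List.nil_prefix) hxy
  | a :: as, [], _, hyx => absurd (List.nil_prefix) hyx
  | a :: as, b :: bs, hxy, hyx => by
    by_cases h : a = b
    · subst h
      have h1 : ¬ as <+: bs := fun hc => hxy (List.cons_prefix_cons.mpr ⟨rfl, hc⟩)
      have h2 : ¬ bs <+: as := fun hc => hyx (List.cons_prefix_cons.mpr ⟨rfl, hc⟩)
      obtain ⟨d₁, d₂, hne, p1, p2⟩ := lcp_div as bs h1 h2
      refine ⟨d₁, d₂, hne, ?_, ?_⟩ <;>
        simp [lcp, List.cons_prefix_cons, p1, p2]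
    · refine ⟨a, b, h, ?_, ?_⟩ <;> simp [lcp, h]

end Lcp
section Block
variable {Γ Δ : Type} {arΓ : Γ → ℕ} {arΔ : Δ → ℕ}

theorem prefix_append_left {α : Type*} (w : List α) {x y : List α} (h : x <+: y) :
    w ++ x <+: w ++ y := by
  obtain ⟨r, rfl⟩ := h
  exact ⟨r, by rw [List.append_assoc]⟩

theorem lt_ar_of_inPos_snoc {t : Tree arΓ} {w : List ℕ} {c : ℕ} (h : inPos t (w ++ [c])) :
    c < arΓ (root (subtree t w)) := by
  have h1 : inPos (subtree t w) [c] := (inPos_append (inPos_prefix h) [c]).mp h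
  rcases hs : subtree t w with ⟨g, f⟩
  rw [hs] at h1
  obtain ⟨hc, -⟩ := h1
  simpa using hc

theorem exists_snoc_prefix {α : Type*} {x y : List α} (h : x <+: y) (hne : x ≠ y) :
    ∃ c, x ++ [c] <+: y := by
  obtain ⟨r, rfl⟩ := h
  cases r with
  | nil => exact absurd (by simp) hne
  | cons c r' => exact ⟨c, ⟨r', by simp⟩⟩

theorem prefix_of_var_eq {k : ℕ} {s : TreeX arΔ k} {p q : List ℕ} {i : Fin k}
    (hp : inPos s p) (hrp : root (subtree s p) = Sum.inr i) (hq : inPos s q)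
    (hpq : p <+: q) : q = p := by
  obtain ⟨r, rfl⟩ := hpq
  have hr : inPos (subtree s p) r := (inPos_append hp r).mp hq
  rcases hs : subtree s p with ⟨a, f⟩
  rw [hs] at hr hrp
  simp only [root_mk] at hrp
  subst hrp
  cases r with
  | nil => simp
  | cons c r' =>
    obtain ⟨hc, -⟩ := hr
    exact absurd hc (by simp [extAr])

variable (φ : ∀ g : Γ, TreeX arΔ (arΓ g)) (hφ : Complete φ)

theorem chi_not_prefix {g : Γ} {i j : Fin (arΓ g)} (hne : i ≠ j) :
    ¬ chi φ hφ g i <+: chi φ hφ g j := by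
  intro hp
  have heq := prefix_of_var_eq (chi_spec φ hφ g i).1 (chi_spec φ hφ g i).2
    (chi_spec φ hφ g j).1 hp
  have h2 := (chi_spec φ hφ g j).2
  rw [heq, (chi_spec φ hφ g i).2] at h2
  exact hne (Sum.inr_injective h2)

theorem block_pos_root {s : Tree arΓ} {q : List ℕ} {d' : Δ}
    (hq : inPos (φ (root s)) q) (hr : root (subtree (φ (root s)) q) = Sum.inl d') :
    inPos (applyHom φ s) q ∧ root (subtree (applyHom φ s) q) = d' := by
  obtain ⟨g, f⟩ := s
  simp only [root_mk] at hq hr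
  have key := subst_inl (fun i => applyHom φ (f i)) hq hr
  rw [applyHom_mk]
  refine ⟨key.1, ?_⟩
  rw [key.2]
  rcases hs : subtree (φ g) q with ⟨a, f'⟩
  rw [hs] at hr
  simp only [root_mk] at hr
  subst hr
  rfl

/-- Positions with two distinct children inside a `φ`-block give branch points of the image. -/
theorem branch_blk {t : Tree arΓ} {w : List ℕ} (hw : inPos t w) {q : List ℕ} {d₁ d₂ : ℕ}
    (h1 : inPos (φ (root (subtree t w))) (q ++ [d₁]))
    (h2 : inPos (φ (root (subtree t w))) (q ++ [d₂])) (hne : d₁ ≠ d₂) :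
    (psi φ hφ t w ++ q, d₁, d₂) ∈ branch (applyHom φ t) := by
  obtain ⟨d', hd'⟩ := root_subtree_inl h1
  have hq : inPos (φ (root (subtree t w))) q := inPos_prefix h1
  have hblk := block_pos_root φ (s := subtree t w) hq hd'
  -- lift into the whole tree
  have hψ : inPos (applyHom φ t) (psi φ hφ t w) := psi_inPos φ hφ hw
  have hsub : subtree (applyHom φ t) (psi φ hφ t w) = applyHom φ (subtree t w) :=
    subtree_applyHom_psi φ hφ hw
  have hpos : inPos (applyHom φ t) (psi φ hφ t w ++ q) := by
    rw [inPos_append hψ, hsub]; exact hblk.1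
  have hroot : root (subtree (applyHom φ t) (psi φ hφ t w ++ q)) = d' := by
    rw [subtree_append hψ, hsub]; exact hblk.2
  -- arities
  have harity : ∀ d : ℕ, inPos (φ (root (subtree t w))) (q ++ [d]) → d < arΔ d' := by
    intro d hd
    have := lt_ar_of_inPos_snoc (t := φ (root (subtree t w))) hd
    rw [hd'] at this
    simpa [extAr] using this
  refine ⟨hpos, ?_, ?_, ?_, hne⟩
  · rw [hroot]
    have e1 := harity d₁ h1
    have e2 := harity d₂ h2
    omega
  · rw [hroot]; exact harity d₁ h1
  · rw [hroot]; exact harity d₂ h2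

end Block
section Grand
variable {Γ Δ : Type} {arΓ : Γ → ℕ} {arΔ : Δ → ℕ}
variable (φ : ∀ g : Γ, TreeX arΔ (arΓ g)) (hφ : Complete φ)

def MainP (ℓ n : ℕ) : Prop := ∀ (t : Tree arΓ) (w : List ℕ) (a b : ℕ),
  (w, a, b) ∈ SSP ℓ n t →
  ∃ (q : List ℕ) (d₁ d₂ : ℕ) (ha : a < arΓ (root (subtree t w)))
      (hb : b < arΓ (root (subtree t w))),
    (psi φ hφ t w ++ q, d₁, d₂) ∈ SSP ℓ n (applyHom φ t) ∧
    inPos (φ (root (subtree t w))) q ∧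
    q ++ [d₁] <+: chi φ hφ (root (subtree t w)) ⟨a, ha⟩ ∧
    q ++ [d₂] <+: chi φ hφ (root (subtree t w)) ⟨b, hb⟩

def ChainP (ℓ n : ℕ) : Prop := ∀ (t : Tree arΓ) (s w₁ : List ℕ), inPos t s →
  w₁ ∈ SP ℓ n (subtree t s) →
  ∃ W ∈ SP ℓ n (subtree (applyHom φ t) (psi φ hφ t s)),
    (branchPath t s w₁ ∩ SP ℓ n t).ncard ≤
      (branchPath (applyHom φ t) (psi φ hφ t s) W ∩ SP ℓ n (applyHom φ t)).ncard

theorem side_transfer {ℓ m : ℕ} (CH : ChainP φ hφ ℓ m) {t : Tree arΓ} {z : List ℕ} {α : ℕ}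
    (hz : inPos t (z ++ [α]))
    (hs : ∃ w₁ ∈ SP ℓ m (subtree t (z ++ [α])),
      ℓ ^ (m+1) ≤ (branchPath t (z ++ [α]) w₁ ∩ SP ℓ m t).ncard)
    {X : List ℕ} (hX : X <+: psi φ hφ t (z ++ [α])) (hXpos : inPos (applyHom φ t) X) :
    ∃ W' ∈ SP ℓ m (subtree (applyHom φ t) X),
      ℓ ^ (m+1) ≤ (branchPath (applyHom φ t) X W' ∩ SP ℓ m (applyHom φ t)).ncard := by
  obtain ⟨w₁, hw₁, hcard⟩ := hs
  obtain ⟨W, hW, hcard'⟩ := CH t (z ++ [α]) w₁ hz hw₁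
  obtain ⟨δ, hδ⟩ := hX
  refine ⟨δ ++ W, ?_, ?_⟩
  · have hψpos : inPos (applyHom φ t) (psi φ hφ t (z ++ [α])) := psi_inPos φ hφ hz
    rw [← SP_shift ℓ m hXpos (δ ++ W)]
    have h2 := (SP_shift ℓ m hψpos W).mpr hW
    rw [← hδ, List.append_assoc] at h2
    exact h2
  · have hsub : branchPath (applyHom φ t) (psi φ hφ t (z ++ [α])) W ∩ SP ℓ m (applyHom φ t)
        ⊆ branchPath (applyHom φ t) X (δ ++ W) ∩ SP ℓ m (applyHom φ t) := by
      apply Set.inter_subset_inter_left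
      rw [← hδ]
      exact branchPath_rebase X δ W
    exact le_trans (le_trans hcard hcard')
      (Set.ncard_le_ncard hsub ((branchPath_finite _ _ _).inter_of_left _))

def Sides (ℓ : ℕ) : ℕ → Tree arΓ → List ℕ → ℕ → List ℕ → ℕ → Prop
  | 0, _, _, _, _, _ => True
  | m+1, t, E, d, z, α =>
      inPos t (z ++ [α]) ∧ (E ++ [d] <+: psi φ hφ t (z ++ [α])) ∧
      ∃ w₁ ∈ SP ℓ m (subtree t (z ++ [α])),
        ℓ ^ (m+1) ≤ (branchPath t (z ++ [α]) w₁ ∩ SP ℓ m t).ncard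

theorem harvest_left (ℓ n : ℕ) {t : Tree arΓ} {u : List ℕ} {a b : ℕ}
    (h : (u, a, b) ∈ SSP ℓ n t) {E : List ℕ} {d : ℕ}
    (hp : E ++ [d] <+: psi φ hφ t (u ++ [a])) : Sides φ hφ ℓ n t E d u a := by
  cases n with
  | zero => trivial
  | succ m =>
    have hb := h.1
    exact ⟨inPos_snoc hb.1 hb.2.2.1, hp, h.2.1⟩

theorem harvest_right (ℓ n : ℕ) {t : Tree arΓ} {u : List ℕ} {a b : ℕ}
    (h : (u, a, b) ∈ SSP ℓ n t) {E : List ℕ} {d : ℕ}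
    (hp : E ++ [d] <+: psi φ hφ t (u ++ [b])) : Sides φ hφ ℓ n t E d u b := by
  cases n with
  | zero => trivial
  | succ m =>
    have hb := h.1
    exact ⟨inPos_snoc hb.1 hb.2.2.2.1, hp, h.2.2⟩

theorem build_triple (ℓ n : ℕ) (CH : ∀ m, n = m + 1 → ChainP φ hφ ℓ m)
    {t : Tree arΓ} {u : List ℕ} (hu : inPos t u) {q : List ℕ} {d₁ d₂ : ℕ} (hne : d₁ ≠ d₂)
    (hq1 : inPos (φ (root (subtree t u))) (q ++ [d₁]))
    (hq2 : inPos (φ (root (subtree t u))) (q ++ [d₂]))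
    {z₁ z₂ : List ℕ} {α₁ α₂ : ℕ}
    (h1 : Sides φ hφ ℓ n t (psi φ hφ t u ++ q) d₁ z₁ α₁)
    (h2 : Sides φ hφ ℓ n t (psi φ hφ t u ++ q) d₂ z₂ α₂) :
    (psi φ hφ t u ++ q, d₁, d₂) ∈ SSP ℓ n (applyHom φ t) := by
  have hbr := branch_blk φ hφ hu hq1 hq2 hne
  cases n with
  | zero => exact hbr
  | succ m =>
    obtain ⟨hz1, hp1, hs1⟩ := h1
    obtain ⟨hz2, hp2, hs2⟩ := h2
    have hX1pos : inPos (applyHom φ t) ((psi φ hφ t u ++ q) ++ [d₁]) :=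
      inPos_snoc hbr.1 hbr.2.2.1
    have hX2pos : inPos (applyHom φ t) ((psi φ hφ t u ++ q) ++ [d₂]) :=
      inPos_snoc hbr.1 hbr.2.2.2.1
    exact ⟨hbr, side_transfer φ hφ (CH m rfl) hz1 hs1 hp1 hX1pos,
      side_transfer φ hφ (CH m rfl) hz2 hs2 hp2 hX2pos⟩

theorem main_step (ℓ n : ℕ) (CH : ∀ m, n = m + 1 → ChainP φ hφ ℓ m) : MainP φ hφ ℓ n := by
  intro t w a b h
  have hbr := SSP_subset_branch ℓ n t h
  have hw : inPos t w := hbr.1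
  have ha : a < arΓ (root (subtree t w)) := hbr.2.2.1
  have hb : b < arΓ (root (subtree t w)) := hbr.2.2.2.1
  have hab : a ≠ b := hbr.2.2.2.2
  have hij : (⟨a, ha⟩ : Fin (arΓ (root (subtree t w)))) ≠ ⟨b, hb⟩ := by
    simp only [ne_eq, Fin.mk.injEq]; exact hab
  obtain ⟨d₁, d₂, hdne, hp1, hp2⟩ :=
    lcp_div (chi φ hφ (root (subtree t w)) ⟨a, ha⟩) (chi φ hφ (root (subtree t w)) ⟨b, hb⟩)
      (chi_not_prefix φ hφ hij) (chi_not_prefix φ hφ hij.symm)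
  have hq1 : inPos (φ (root (subtree t w)))
      (lcp (chi φ hφ (root (subtree t w)) ⟨a, ha⟩) (chi φ hφ (root (subtree t w)) ⟨b, hb⟩) ++ [d₁]) :=
    inPos_of_prefix hp1 (chi_spec φ hφ (root (subtree t w)) ⟨a, ha⟩).1
  have hq2 : inPos (φ (root (subtree t w)))
      (lcp (chi φ hφ (root (subtree t w)) ⟨a, ha⟩) (chi φ hφ (root (subtree t w)) ⟨b, hb⟩) ++ [d₂]) :=
    inPos_of_prefix hp2 (chi_spec φ hφ (root (subtree t w)) ⟨b, hb⟩).1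
  refine ⟨_, d₁, d₂, ha, hb, ?_, inPos_prefix hq1, hp1, hp2⟩
  refine build_triple φ hφ ℓ n CH hw hdne hq1 hq2 (z₁ := w) (α₁ := a) (z₂ := w) (α₂ := b)
    (harvest_left φ hφ ℓ n h ?_) (harvest_right φ hφ ℓ n h ?_)
  · rw [psi_snoc φ hφ hw ha, List.append_assoc]
    exact prefix_append_left _ hp1
  · rw [psi_snoc φ hφ hw hb, List.append_assoc]
    exact prefix_append_left _ hp2

end Grand
section Chain
variable {Γ Δ : Type} {arΓ : Γ → ℕ} {arΔ : Δ → ℕ}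
variable (φ : ∀ g : Γ, TreeX arΔ (arΓ g)) (hφ : Complete φ)

theorem chi_congr {g g' : Γ} (h : g = g') {c : ℕ} (hc : c < arΓ g) (hc' : c < arΓ g') :
    chi φ hφ g ⟨c, hc⟩ = chi φ hφ g' ⟨c, hc'⟩ := by subst h; rfl

theorem chain_step (ℓ n : ℕ) (CH : ∀ m, n = m + 1 → ChainP φ hφ ℓ m)
    (MA : MainP φ hφ ℓ n) : ChainP φ hφ ℓ n := by
  classical
  intro t s w₁ hs hw₁
  obtain ⟨a', b', hab'⟩ := hw₁
  have hVpos : inPos (subtree t s) w₁ := (SSP_subset_branch ℓ n _ hab').1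
  have hupos : inPos t (s ++ w₁) := (inPos_append hs w₁).mpr hVpos
  have hstar : (s ++ w₁, a', b') ∈ SSP ℓ n t := (SSP_shift ℓ n hs w₁ a' b').mpr hab'
  obtain ⟨q', e₁, e₂, ha', hb', hmem', hq'pos, hp1', hp2'⟩ := MA t (s ++ w₁) a' b' hstar
  have hψs : inPos (applyHom φ t) (psi φ hφ t s) := psi_inPos φ hφ hs
  have hψapp : psi φ hφ t (s ++ w₁) = psi φ hφ t s ++ psi φ hφ (subtree t s) w₁ :=
    psi_append φ hφ hs w₁
  set T := applyHom φ t with hT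
  set W := psi φ hφ (subtree t s) w₁ ++ q' with hWdef
  have hEstar : psi φ hφ t (s ++ w₁) ++ q' = psi φ hφ t s ++ W := by
    rw [hψapp, List.append_assoc]
  have hWmem : W ∈ SP ℓ n (subtree T (psi φ hφ t s)) := by
    rw [← SP_shift ℓ n hψs, ← hEstar]
    exact ⟨e₁, e₂, hmem'⟩
  refine ⟨W, hWmem, ?_⟩
  set S := branchPath t s w₁ ∩ SP ℓ n t with hSdef
  set Tgt := branchPath T (psi φ hφ t s) W ∩ SP ℓ n T with hTgtdef
  have hex : ∀ u ∈ S, ∃ e : List ℕ,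
      e ∈ Tgt ∧ psi φ hφ t u <+: e ∧
      (u = s ++ w₁ ∨ ∃ c, u ++ [c] <+: s ++ w₁ ∧
        e.length < (psi φ hφ t (u ++ [c])).length) := by
    rintro u ⟨⟨w', hw'pref, rfl, i0, j0, hbr0⟩, hSP⟩
    by_cases hend : w' = w₁
    · subst hend
      have hbrE : (psi φ hφ t s ++ W, e₁, e₂) ∈ branch T := by
        rw [← hEstar]; exact SSP_subset_branch ℓ n T hmem'
      have hSPE : psi φ hφ t (s ++ w') ++ q' ∈ SP ℓ n T := ⟨e₁, e₂, hmem'⟩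
      exact ⟨psi φ hφ t (s ++ w') ++ q',
        ⟨⟨W, List.prefix_refl W, hEstar, e₁, e₂, hbrE⟩, hSPE⟩,
        List.prefix_append _ _, Or.inl rfl⟩
    · obtain ⟨c, hc1⟩ := exists_snoc_prefix hw'pref hend
      have hucpref : (s ++ w') ++ [c] <+: s ++ w₁ := by
        rw [List.append_assoc]
        exact prefix_append_left s hc1
      have hupos' : inPos t (s ++ w') := hbr0.1
      have hucpos : inPos t ((s ++ w') ++ [c]) := inPos_of_prefix hucpref hupos
      have hcar : c < arΓ (root (subtree t (s ++ w'))) := lt_ar_of_inPos_snoc hucpos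
      obtain ⟨a, b, hab⟩ := hSP
      have habr := SSP_subset_branch ℓ n t hab
      have haar : a < arΓ (root (subtree t (s ++ w'))) := habr.2.2.1
      have hbar : b < arΓ (root (subtree t (s ++ w'))) := habr.2.2.2.1
      have hane : a ≠ b := habr.2.2.2.2
      have hxe : ∃ x, ∃ hx : x < arΓ (root (subtree t (s ++ w'))), x ≠ c ∧
          (∀ E d, (E ++ [d] <+: psi φ hφ t ((s ++ w') ++ [x])) →
            Sides φ hφ ℓ n t E d (s ++ w') x) := by
        by_cases hac : a = c
        · exact ⟨b, hbar, fun hbc => hane (hac.trans hbc.symm),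
            fun E d hp => harvest_right φ hφ ℓ n hab hp⟩
        · exact ⟨a, haar, hac, fun E d hp => harvest_left φ hφ ℓ n hab hp⟩
      obtain ⟨x, hx, hxc, hharv⟩ := hxe
      have hfne : (⟨x, hx⟩ : Fin (arΓ (root (subtree t (s ++ w'))))) ≠ ⟨c, hcar⟩ := by
        simp only [ne_eq, Fin.mk.injEq]; exact hxc
      obtain ⟨d₁, d₂, hdne, hq1p, hq2p⟩ :=
        lcp_div (chi φ hφ (root (subtree t (s ++ w'))) ⟨x, hx⟩)
          (chi φ hφ (root (subtree t (s ++ w'))) ⟨c, hcar⟩)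
          (chi_not_prefix φ hφ hfne) (chi_not_prefix φ hφ hfne.symm)
      set q₀ := lcp (chi φ hφ (root (subtree t (s ++ w'))) ⟨x, hx⟩)
          (chi φ hφ (root (subtree t (s ++ w'))) ⟨c, hcar⟩) with hq₀def
      have hq1 : inPos (φ (root (subtree t (s ++ w')))) (q₀ ++ [d₁]) :=
        inPos_of_prefix hq1p (chi_spec φ hφ (root (subtree t (s ++ w'))) ⟨x, hx⟩).1
      have hq2 : inPos (φ (root (subtree t (s ++ w')))) (q₀ ++ [d₂]) :=
        inPos_of_prefix hq2p (chi_spec φ hφ (root (subtree t (s ++ w'))) ⟨c, hcar⟩).1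
      have hpx : (psi φ hφ t (s ++ w') ++ q₀) ++ [d₁] <+: psi φ hφ t ((s ++ w') ++ [x]) := by
        rw [psi_snoc φ hφ hupos' hx, List.append_assoc]
        exact prefix_append_left _ hq1p
      have hpc : (psi φ hφ t (s ++ w') ++ q₀) ++ [d₂] <+: psi φ hφ t ((s ++ w') ++ [c]) := by
        rw [psi_snoc φ hφ hupos' hcar, List.append_assoc]
        exact prefix_append_left _ hq2p
      have hstarpos : inPos t ((s ++ w₁) ++ [a']) := inPos_snoc hupos ha'
      have hpc2 : (psi φ hφ t (s ++ w') ++ q₀) ++ [d₂] <+: psi φ hφ t ((s ++ w₁) ++ [a']) :=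
        hpc.trans (psi_prefix φ hφ hstarpos (hucpref.trans (List.prefix_append _ _)))
      have htriple := build_triple φ hφ ℓ n CH hupos' hdne hq1 hq2
        (hharv _ _ hpx) (harvest_left φ hφ ℓ n hstar hpc2)
      -- the produced element
      have hw's : inPos (subtree t s) w' := inPos_of_prefix hw'pref hVpos
      have hsplit : psi φ hφ t (s ++ w') = psi φ hφ t s ++ psi φ hφ (subtree t s) w' :=
        psi_append φ hφ hs w'
      have hsub_eq : subtree (subtree t s) w' = subtree t (s ++ w') := (subtree_append hs w').symm
      have hcar2 : c < arΓ (root (subtree (subtree t s) w')) := by rw [hsub_eq]; exact hcar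
      have hsnoc2 : psi φ hφ (subtree t s) (w' ++ [c]) =
          psi φ hφ (subtree t s) w' ++ chi φ hφ (root (subtree t (s ++ w'))) ⟨c, hcar⟩ := by
        have h0 := psi_snoc φ hφ hw's hcar2
        rw [h0, chi_congr φ hφ (congrArg root hsub_eq) hcar2 hcar]
      have hq₀pc : q₀ <+: chi φ hφ (root (subtree t (s ++ w'))) ⟨c, hcar⟩ :=
        (List.prefix_append q₀ [d₂]).trans hq2p
      have hw''W : psi φ hφ (subtree t s) w' ++ q₀ <+: W := by
        refine (prefix_append_left _ hq₀pc).trans ?_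
        rw [← hsnoc2]
        refine (psi_prefix φ hφ (t := subtree t s) hVpos hc1).trans ?_
        exact List.prefix_append _ _
      have heq : psi φ hφ t (s ++ w') ++ q₀ =
          psi φ hφ t s ++ (psi φ hφ (subtree t s) w' ++ q₀) := by
        rw [hsplit, List.append_assoc]
      have hbrE : (psi φ hφ t s ++ (psi φ hφ (subtree t s) w' ++ q₀), d₁, d₂) ∈ branch T := by
        rw [← heq]; exact SSP_subset_branch ℓ n T htriple
      refine ⟨psi φ hφ t (s ++ w') ++ q₀,
        ⟨⟨psi φ hφ (subtree t s) w' ++ q₀, hw''W, heq, d₁, d₂, hbrE⟩, ⟨d₁, d₂, htriple⟩⟩,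
        List.prefix_append _ _, Or.inr ⟨c, hucpref, ?_⟩⟩
      rw [psi_snoc φ hφ hupos' hcar]
      have hlen := hq2p.length_le
      simp only [List.length_append, List.length_cons] at hlen ⊢
      omega
  -- choose the witnesses and count
  have hex' : ∀ u : List ℕ, ∃ e : List ℕ, u ∈ S →
      e ∈ Tgt ∧ psi φ hφ t u <+: e ∧
      (u = s ++ w₁ ∨ ∃ c, u ++ [c] <+: s ++ w₁ ∧
        e.length < (psi φ hφ t (u ++ [c])).length) := by
    intro u
    by_cases hu : u ∈ S
    · exact ⟨(hex u hu).choose, fun _ => (hex u hu).choose_spec⟩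
    · exact ⟨[], fun h => absurd h hu⟩
  choose F hF using hex'
  have hshape : ∀ u ∈ S, ∃ w', w' <+: w₁ ∧ u = s ++ w' := by
    rintro u ⟨⟨w', hp, he, -⟩, -⟩
    exact ⟨w', hp, he⟩
  have hSle : ∀ u ∈ S, u <+: s ++ w₁ := by
    intro u hu
    obtain ⟨w', hp, rfl⟩ := hshape u hu
    exact prefix_append_left s hp
  have hmono : ∀ u ∈ S, ∀ v ∈ S, u <+: v → u ≠ v → (F u).length < (F v).length := by
    intro u hu v hv hpre hne
    rcases (hF u hu).2.2 with heq | ⟨c, hcp, hlen⟩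
    · exfalso
      apply hne
      subst heq
      exact (hpre.eq_of_length_le ((hSle v hv).length_le)).symm ▸ rfl
    · have hlenuv : u.length < v.length := by
        rcases Nat.lt_or_ge u.length v.length with h | h
        · exact h
        · exact absurd (hpre.eq_of_length_le h) hne
      have hucv : u ++ [c] <+: v := by
        rcases List.prefix_or_prefix_of_prefix hcp (hSle v hv) with h | h
        · exact h
        · have : v = u ++ [c] := by
            apply h.eq_of_length_le
            simp only [List.length_append, List.length_cons, List.length_nil]
            omega
          rw [this]
      have hvpos : inPos t v := inPos_of_prefix (hSle v hv) hupos
      have h1 : (psi φ hφ t (u ++ [c])).length ≤ (psi φ hφ t v).length :=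
        (psi_prefix φ hφ hvpos hucv).length_le
      have h2 : (psi φ hφ t v).length ≤ (F v).length := ((hF v hv).2.1).length_le
      omega
  have hinj : Set.InjOn F S := by
    intro u hu v hv huv
    by_contra hne
    have hcomp : u <+: v ∨ v <+: u := by
      obtain ⟨wu, hpu, rfl⟩ := hshape u hu
      obtain ⟨wv, hpv, rfl⟩ := hshape v hv
      rcases List.prefix_or_prefix_of_prefix hpu hpv with h | h
      · exact Or.inl (prefix_append_left s h)
      · exact Or.inr (prefix_append_left s h)
    rcases hcomp with h | h
    · have := hmono u hu v hv h hne
      rw [huv] at this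
      omega
    · have := hmono v hv u hu h (Ne.symm hne)
      rw [huv] at this
      omega
  exact Set.ncard_le_ncard_of_injOn F (fun u hu => (hF u hu).1) hinj
    ((branchPath_finite T (psi φ hφ t s) W).inter_of_left _)

theorem grand (ℓ : ℕ) : ∀ n, MainP φ hφ ℓ n ∧ ChainP φ hφ ℓ n := by
  intro n
  induction n with
  | zero =>
    have CH0 : ∀ m, 0 = m + 1 → ChainP φ hφ ℓ m := fun m h => absurd h (by omega)
    have M := main_step φ hφ ℓ 0 CH0
    exact ⟨M, chain_step φ hφ ℓ 0 CH0 M⟩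
  | succ k ih =>
    have CH : ∀ m, k + 1 = m + 1 → ChainP φ hφ ℓ m := fun m h => by
      have hm : m = k := by omega
      subst hm; exact ih.2
    have M := main_step φ hφ ℓ (k+1) CH
    exact ⟨M, chain_step φ hφ ℓ (k+1) CH M⟩

end Chain
section Final
variable {Γ Δ : Type} {arΓ : Γ → ℕ} {arΔ : Δ → ℕ}

theorem SSP_of_complete_hom_aux (φ : ∀ g : Γ, TreeX arΔ (arΓ g)) (hφ : Complete φ)
    (t : Tree arΓ) (ℓ n : ℕ) (i j : ℕ) (h : ([], i, j) ∈ SSP ℓ n t) :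
    ∃ v i' j', (v, i', j') ∈ SSP ℓ n (applyHom φ t) ∧
      v ∈ pos (φ (root t)) ∧
      (∃ (hi : i < arΓ (root t)) (v₁ : List ℕ), v₁ ∈ pos (φ (root t)) ∧
        root (subtree (φ (root t)) v₁) = Sum.inr ⟨i, hi⟩ ∧ v ++ [i'] <+: v₁) ∧
      (∃ (hj : j < arΓ (root t)) (v₂ : List ℕ), v₂ ∈ pos (φ (root t)) ∧
        root (subtree (φ (root t)) v₂) = Sum.inr ⟨j, hj⟩ ∧ v ++ [j'] <+: v₂) := by
  obtain ⟨q, d₁, d₂, hi0, hj0, hmem, hqpos, hp1, hp2⟩ := (grand φ hφ ℓ n).1 t [] i j h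
  have heq : subtree t [] = t := subtree_nil t
  have hre : root (subtree t []) = root t := congrArg root heq
  have hi : i < arΓ (root t) := hre ▸ hi0
  have hj : j < arΓ (root t) := hre ▸ hj0
  rw [psi_nil φ hφ t, List.nil_append] at hmem
  have hp1' : q ++ [d₁] <+: chi φ hφ (root t) ⟨i, hi⟩ := by
    rw [← chi_congr φ hφ hre hi0 hi]; exact hp1
  have hp2' : q ++ [d₂] <+: chi φ hφ (root t) ⟨j, hj⟩ := by
    rw [← chi_congr φ hφ hre hj0 hj]; exact hp2
  have hqpos' : inPos (φ (root t)) q := hre ▸ hqpos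
  exact ⟨q, d₁, d₂, hmem, hqpos',
    ⟨hi, chi φ hφ (root t) ⟨i, hi⟩, (chi_spec φ hφ (root t) ⟨i, hi⟩).1,
      (chi_spec φ hφ (root t) ⟨i, hi⟩).2, hp1'⟩,
    ⟨hj, chi φ hφ (root t) ⟨j, hj⟩, (chi_spec φ hφ (root t) ⟨j, hj⟩).1,
      (chi_spec φ hφ (root t) ⟨j, hj⟩).2, hp2'⟩⟩

end Final
/-- if `φ` is a complete tree homomorphism and `([], i, j) ∈ SSP^ℓ_n(t)`,
then there is `(v, i', j') ∈ SSP^ℓ_n(φ̂(t))` with `v ∈ pos(φ(g))` (where `g` is the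
root symbol of `t`), `v ++ [i'] ⪯ v₁` for some position `v₁` of `φ(g)` labelled by
the variable `x_i`, and `v ++ [j'] ⪯ v₂` for some position `v₂` of `φ(g)` labelled
by the variable `x_j`. -/
theorem SSP_of_complete_hom {Γ Δ : Type} {arΓ : Γ → ℕ} {arΔ : Δ → ℕ}
    (φ : ∀ g : Γ, TreeX arΔ (arΓ g)) (hφ : Complete φ)
    (t : Tree arΓ) (ℓ n : ℕ) (i j : ℕ)
    (h : ([], i, j) ∈ SSP ℓ n t) :
    ∃ v i' j', (v, i', j') ∈ SSP ℓ n (applyHom φ t) ∧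
      v ∈ pos (φ (root t)) ∧
      (∃ (hi : i < arΓ (root t)) (v₁ : List ℕ), v₁ ∈ pos (φ (root t)) ∧
        root (subtree (φ (root t)) v₁) = Sum.inr ⟨i, hi⟩ ∧ v ++ [i'] <+: v₁) ∧
      (∃ (hj : j < arΓ (root t)) (v₂ : List ℕ), v₂ ∈ pos (φ (root t)) ∧
        root (subtree (φ (root t)) v₂) = Sum.inr ⟨j, hj⟩ ∧ v ++ [j'] <+: v₂) := by
  exact SSP_of_complete_hom_aux φ hφ t ℓ n i j h

end Paper
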